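/- For every n ≥ 1, the number of automorphisms of the maximally balanced rooted bifurcating tree with n leaves equals 2^{n − 1 − c(n)}, where c(n) is the minimum Colless index for n leaves, defined by c(1) = 0, c(2n) = 2·c(n), c(2n+1) = c(n+1) + c(n) + 1. -/

import Mathlib

inductive BTree where
  | leaf : BTree
  | node : BTree → BTree → BTree
deriving DecidableEq

def BTree.leaves : BTree → ℕ
  | .leaf => 1
  | .node l r => l.leaves + r.leaves

/-- The number of automorphisms of a rooted bifurcating tree shape:
`2` raised to the number of symmetry vertices. -/
def BTree.autCount : BTree → ℕ
  | .leaf => 1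
  | .node l r => (if l = r then 2 else 1) * l.autCount * r.autCount

/-- The maximally balanced bifurcating tree with `n` leaves. -/
def mb (n : ℕ) : BTree :=
  if h : n ≤ 1 then BTree.leaf
  else BTree.node (mb ((n + 1) / 2)) (mb (n / 2))
termination_by n
decreasing_by all_goals omega

/-!
Splitting `mb n` at the root gives `mb ⌈n/2⌉` and `mb ⌊n/2⌋`, which coincide exactly when `n` is
even (otherwise their leaf counts differ). Hence the number `s n` of symmetry vertices of `mb n`
satisfies `s 1 = 0`, `s (2m) = 2 s m + 1` and `s (2m+1) = s (m+1) + s m`, the same recursion as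
`n - 1 - c n`.
-/

namespace BTree

def symCount : BTree → ℕ
  | .leaf => 0
  | .node l r => (if l = r then 1 else 0) + l.symCount + r.symCount

theorem autCount_eq_two_pow_symCount (t : BTree) : t.autCount = 2 ^ t.symCount := by
  induction t with
  | leaf => rfl
  | node l r ihl ihr =>
    rw [autCount, symCount, ihl, ihr, pow_add, pow_add]
    split_ifs <;> ring

end BTree

open BTree

theorem mb_of_two_le {n : ℕ} (hn : 2 ≤ n) : mb n = .node (mb ((n + 1) / 2)) (mb (n / 2)) := by
  rw [mb, dif_neg (by omega)]

theorem mb_one : mb 1 = .leaf := by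
  rw [mb, dif_pos le_rfl]

theorem mb_two_mul {m : ℕ} (hm : 1 ≤ m) : mb (2 * m) = .node (mb m) (mb m) := by
  rw [mb_of_two_le (by omega), show (2 * m + 1) / 2 = m by omega, show 2 * m / 2 = m by omega]

theorem mb_two_mul_add_one {m : ℕ} (hm : 1 ≤ m) :
    mb (2 * m + 1) = .node (mb (m + 1)) (mb m) := by
  rw [mb_of_two_le (by omega), show (2 * m + 1 + 1) / 2 = m + 1 by omega,
    show (2 * m + 1) / 2 = m by omega]

theorem leaves_mb {n : ℕ} (hn : 1 ≤ n) : (mb n).leaves = n := by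
  induction n using Nat.strong_induction_on with
  | _ n ih =>
    rcases Nat.lt_or_ge n 2 with hlt | hge
    · obtain rfl : n = 1 := by omega
      rw [mb_one, leaves]
    · rw [mb_of_two_le hge, leaves, ih _ (by omega) (by omega), ih _ (by omega) (by omega)]
      omega

theorem mb_add_one_ne {m : ℕ} (hm : 1 ≤ m) : mb (m + 1) ≠ mb m := fun h => by
  simpa [leaves_mb hm, leaves_mb (Nat.le_add_left 1 m)] using congrArg leaves h

section Colless

variable (c : ℕ → ℕ) (h1 : c 1 = 0)
  (heven : ∀ n : ℕ, 1 ≤ n → c (2 * n) = 2 * c n)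
  (hodd : ∀ n : ℕ, 1 ≤ n → c (2 * n + 1) = c (n + 1) + c n + 1)
include h1 heven hodd

theorem symCount_mb_add {n : ℕ} (hn : 1 ≤ n) : (mb n).symCount + c n = n - 1 := by
  induction n using Nat.strong_induction_on with
  | _ n ih =>
    obtain ⟨m, rfl | rfl⟩ := Nat.even_or_odd' n
    · have hm : 1 ≤ m := by omega
      have := ih m (by omega) hm
      rw [mb_two_mul hm, symCount, if_pos rfl, heven m hm]
      omega
    · rcases Nat.eq_zero_or_pos m with rfl | hm
      · rw [mb_one, symCount, h1]
      · have := ih m (by omega) hm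
        have := ih (m + 1) (by omega) (by omega)
        rw [mb_two_mul_add_one hm, symCount, if_neg (mb_add_one_ne hm), hodd m hm]
        omega

end Colless

theorem maxBalanced_autCount (c : ℕ → ℕ) (h1 : c 1 = 0)
    (heven : ∀ n : ℕ, 1 ≤ n → c (2 * n) = 2 * c n)
    (hodd : ∀ n : ℕ, 1 ≤ n → c (2 * n + 1) = c (n + 1) + c n + 1) :
    ∀ n : ℕ, 1 ≤ n → (mb n).autCount = 2 ^ (n - 1 - c n) := by
  intro n hn
  have := symCount_mb_add c h1 heven hodd hn
  rw [autCount_eq_two_pow_symCount]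
  congr 1
  omega
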